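/- arXiv:2304.08055 — 7 statements merged into one kernel-verified Lean document; each statement's English description precedes it below -/
import Mathlib

section
/- The 5×5 skew-symmetric matrix of linear forms M(x₁,x₂,x₃) = [[0, x₁, 0, 0, x₃], [−x₁, 0, x₂, x₃, 0], [0, −x₂, 0, x₁, 0], [0, −x₃, −x₁, 0, x₂], [−x₃, 0, 0, −x₂, 0]] has rank exactly 4 for every (x₁,x₂,x₃) ∈ ℂ³ with (x₁,x₂,x₃) ≠ (0,0,0). -/
open Matrix

/-!
The vector `v = (x₂², -x₁x₃, x₁x₂ + x₃², -x₂x₃, x₁²)` of signed sub-Pfaffians of the skew-symmetric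
matrix `M` lies in its kernel, so `rank M ≤ 4`. Deleting row and column `i` of `M` leaves a
`4 × 4` skew-symmetric matrix whose determinant is its squared Pfaffian `vᵢ²`. For `x ≠ 0` some
`vᵢ` is nonzero (`v₀ = x₂²`, `v₄ = x₁²`, and `v₂ = x₃²` once `x₁ = x₂ = 0`), which gives an
invertible `4 × 4` minor.
-/

theorem Matrix.rank_lt_card_width_of_mulVec_eq_zero {m n K : Type*} [Field K] [Fintype n]
    {A : Matrix m n K} {v : n → K} (hv : v ≠ 0) (hAv : A *ᵥ v = 0) :
    A.rank < Fintype.card n := by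
  have hker : LinearMap.ker A.mulVecLin ≠ ⊥ :=
    (Submodule.ne_bot_iff _).mpr ⟨v, hAv, hv⟩
  rw [rank, ← Module.finrank_fintype_fun_eq_card K,
    ← LinearMap.finrank_range_add_finrank_ker A.mulVecLin]
  have := Submodule.finrank_eq_zero.not.mpr hker
  omega

theorem Matrix.le_rank_of_det_submatrix_ne_zero {m n R : Type*} [CommRing R] [IsDomain R]
    [Fintype n] {k : ℕ} (A : Matrix m n R) (r : Fin k → m) (c : Fin k → n) (h : (A.submatrix r c).det ≠ 0) :
    k ≤ A.rank := by
  simpa [rank_of_det_ne_zero h] using A.rank_submatrix_le r c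

section

variable {R : Type*} [CommRing R] (x₁ x₂ x₃ : R)

def linearSkewMatrix : Matrix (Fin 5) (Fin 5) R :=
  !![0, x₁, 0, 0, x₃;
    -x₁, 0, x₂, x₃, 0;
    0, -x₂, 0, x₁, 0;
    0, -x₃, -x₁, 0, x₂;
    -x₃, 0, 0, -x₂, 0]

def linearSkewMatrixKernel : Fin 5 → R :=
  ![x₂ ^ 2, -(x₁ * x₃), x₁ * x₂ + x₃ ^ 2, -(x₂ * x₃), x₁ ^ 2]

theorem linearSkewMatrix_mulVec_kernel :
    linearSkewMatrix x₁ x₂ x₃ *ᵥ linearSkewMatrixKernel x₁ x₂ x₃ = 0 := by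
  ext i
  fin_cases i <;>
    simp [linearSkewMatrix, linearSkewMatrixKernel, mulVec, dotProduct, Fin.sum_univ_succ] <;>
    ring

theorem det_linearSkewMatrix_submatrix_succAbove (i : Fin 5) :
    ((linearSkewMatrix x₁ x₂ x₃).submatrix i.succAbove i.succAbove).det =
      linearSkewMatrixKernel x₁ x₂ x₃ i ^ 2 := by
  fin_cases i <;>
    simp [linearSkewMatrix, linearSkewMatrixKernel, det_succ_row_zero, Fin.sum_univ_succ,
      Fin.succAbove] <;>
    ring

theorem linearSkewMatrixKernel_ne_zero [IsDomain R] (h : (x₁, x₂, x₃) ≠ (0, 0, 0)) :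
    linearSkewMatrixKernel x₁ x₂ x₃ ≠ 0 := by
  intro hv
  have h₀ := congrFun hv 0
  have h₂ := congrFun hv 2
  have h₄ := congrFun hv 4
  simp_all [linearSkewMatrixKernel]

end

theorem stmt0 (x₁ x₂ x₃ : ℂ) (h : (x₁, x₂, x₃) ≠ (0, 0, 0)) :
    (!![0, x₁, 0, 0, x₃;
       -x₁, 0, x₂, x₃, 0;
       0, -x₂, 0, x₁, 0;
       0, -x₃, -x₁, 0, x₂;
       -x₃, 0, 0, -x₂, 0] : Matrix (Fin 5) (Fin 5) ℂ).rank = 4 := by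
  change (linearSkewMatrix x₁ x₂ x₃).rank = 4
  have hv := linearSkewMatrixKernel_ne_zero x₁ x₂ x₃ h
  obtain ⟨i, hi⟩ := Function.ne_iff.mp hv
  refine le_antisymm (Nat.le_of_lt_succ ?_) ?_
  · simpa using rank_lt_card_width_of_mulVec_eq_zero hv (linearSkewMatrix_mulVec_kernel x₁ x₂ x₃)
  · refine le_rank_of_det_submatrix_ne_zero _ i.succAbove i.succAbove ?_
    rw [det_linearSkewMatrix_submatrix_succAbove]
    exact pow_ne_zero 2 hi
end

section
/- The 8×8 matrix of linear forms M(x₀,x₁,x₂) = [[0,x₂,−x₁,0,0,0,0,0],[−x₂,0,x₀,0,0,−x₁,0,0],[x₁,−x₀,0,0,x₂,0,0,0],[0,0,0,x₁,0,0,−x₀,0],[0,0,0,x₂,0,0,0,−x₀],[0,0,0,0,x₀,0,−x₁,0],[0,0,0,0,0,x₀,0,−x₂],[0,0,0,0,0,0,x₂,−x₁]] has rank exactly 6 for every (x₀,x₁,x₂) ∈ ℂ³ with (x₀,x₁,x₂) ≠ (0,0,0). -/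
/-!
The vectors `(x₀, x₁, x₂, 0, …, 0)` and
`(-x₁x₂, 0, 0, x₀², x₁², x₂², x₀x₁, x₀x₂)`, are annihilated by the matrix, and when `x_k ≠ 0`
their rows `k` and `k + 3` form a triangular minor with diagonal `x_k, x_k²`; so the kernel has
dimension at least 2 and the rank is at most 6. Conversely, if `x_k ≠ 0`, the rows and columns
carrying the six entries `±x_k` can be ordered so that they form an upper triangular minor with
diagonal `±x_k`, so the rank is at least 6.
-/

open Matrix

namespace Matrix

theorem card_le_rank_of_isUpperTriangular_submatrix {K m n k : Type*} [Field K] [Fintype n]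
    [Fintype k] [LinearOrder k] (A : Matrix m n K) (r : k → m) (c : k → n)
    (htri : (A.submatrix r c).IsUpperTriangular) (hdiag : ∀ i, A (r i) (c i) ≠ 0) :
    Fintype.card k ≤ A.rank := by
  classical
  have hdet : (A.submatrix r c).det ≠ 0 := by
    rw [det_of_isUpperTriangular htri]
    exact Finset.prod_ne_zero_iff.mpr fun i _ => hdiag i
  rw [← rank_of_det_ne_zero hdet]
  exact rank_submatrix_le A r c

end Matrix

section

variable {K : Type*} [Field K] (x₀ x₁ x₂ : K)

def linearFormMatrix : Matrix (Fin 8) (Fin 8) K :=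
  !![0, x₂, -x₁, 0, 0, 0, 0, 0;
     -x₂, 0, x₀, 0, 0, -x₁, 0, 0;
     x₁, -x₀, 0, 0, x₂, 0, 0, 0;
     0, 0, 0, x₁, 0, 0, -x₀, 0;
     0, 0, 0, x₂, 0, 0, 0, -x₀;
     0, 0, 0, 0, x₀, 0, -x₁, 0;
     0, 0, 0, 0, 0, x₀, 0, -x₂;
     0, 0, 0, 0, 0, 0, x₂, -x₁]

def kernelMatrix : Matrix (Fin 8) (Fin 2) K :=
  !![x₀, -(x₁ * x₂);
     x₁, 0;
     x₂, 0;
     0, x₀ ^ 2;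
     0, x₁ ^ 2;
     0, x₂ ^ 2;
     0, x₀ * x₁;
     0, x₀ * x₂]

theorem linearFormMatrix_mul_kernelMatrix :
    linearFormMatrix x₀ x₁ x₂ * kernelMatrix x₀ x₁ x₂ = 0 := by
  ext i j
  fin_cases i <;> fin_cases j <;>
    simp [linearFormMatrix, kernelMatrix, mul_apply, Fin.sum_univ_succ] <;> ring

variable {x₀ x₁ x₂}

theorem two_le_rank_kernelMatrix (h : x₀ ≠ 0 ∨ x₁ ≠ 0 ∨ x₂ ≠ 0) :
    2 ≤ (kernelMatrix x₀ x₁ x₂).rank := by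
  rcases h with h | h | h
  · exact card_le_rank_of_isUpperTriangular_submatrix _ ![0, 3] ![0, 1]
      (by intro i j hij; fin_cases i <;> fin_cases j <;> first | rfl | simp at hij)
      (by intro i; fin_cases i <;> simp [kernelMatrix, h])
  · exact card_le_rank_of_isUpperTriangular_submatrix _ ![1, 4] ![0, 1]
      (by intro i j hij; fin_cases i <;> fin_cases j <;> first | rfl | simp at hij)
      (by intro i; fin_cases i <;> simp [kernelMatrix, h])
  · exact card_le_rank_of_isUpperTriangular_submatrix _ ![2, 5] ![0, 1]
      (by intro i j hij; fin_cases i <;> fin_cases j <;> first | rfl | simp at hij)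
      (by intro i; fin_cases i <;> simp [kernelMatrix, h])

theorem rank_linearFormMatrix_le_six (h : x₀ ≠ 0 ∨ x₁ ≠ 0 ∨ x₂ ≠ 0) :
    (linearFormMatrix x₀ x₁ x₂).rank ≤ 6 := by
  have hsum := rank_add_rank_le_card_of_mul_eq_zero (linearFormMatrix_mul_kernelMatrix x₀ x₁ x₂)
  have hker := two_le_rank_kernelMatrix h
  simp only [Fintype.card_fin] at hsum
  omega

theorem six_le_rank_linearFormMatrix (h : x₀ ≠ 0 ∨ x₁ ≠ 0 ∨ x₂ ≠ 0) :
    6 ≤ (linearFormMatrix x₀ x₁ x₂).rank := by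
  rcases h with h | h | h
  · exact card_le_rank_of_isUpperTriangular_submatrix _ ![1, 6, 4, 2, 5, 3] ![2, 5, 7, 1, 4, 6]
      (by intro i j hij; fin_cases i <;> fin_cases j <;> first | rfl | simp at hij)
      (by intro i; fin_cases i <;> simp [linearFormMatrix, h])
  · exact card_le_rank_of_isUpperTriangular_submatrix _ ![1, 0, 2, 3, 7, 5] ![5, 2, 0, 3, 7, 6]
      (by intro i j hij; fin_cases i <;> fin_cases j <;> first | rfl | simp at hij)
      (by intro i; fin_cases i <;> simp [linearFormMatrix, h])
  · exact card_le_rank_of_isUpperTriangular_submatrix _ ![2, 0, 1, 4, 7, 6] ![4, 1, 0, 3, 6, 7]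
      (by intro i j hij; fin_cases i <;> fin_cases j <;> first | rfl | simp at hij)
      (by intro i; fin_cases i <;> simp [linearFormMatrix, h])

end

theorem stmt2 (x₀ x₁ x₂ : ℂ) (h : (x₀, x₁, x₂) ≠ (0, 0, 0)) :
    (!![0, x₂, -x₁, 0, 0, 0, 0, 0;
       -x₂, 0, x₀, 0, 0, -x₁, 0, 0;
       x₁, -x₀, 0, 0, x₂, 0, 0, 0;
       0, 0, 0, x₁, 0, 0, -x₀, 0;
       0, 0, 0, x₂, 0, 0, 0, -x₀;
       0, 0, 0, 0, x₀, 0, -x₁, 0;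
       0, 0, 0, 0, 0, x₀, 0, -x₂;
       0, 0, 0, 0, 0, 0, x₂, -x₁] : Matrix (Fin 8) (Fin 8) ℂ).rank = 6 := by
  have hx : x₀ ≠ 0 ∨ x₁ ≠ 0 ∨ x₂ ≠ 0 := by simpa [or_iff_not_and_not] using h
  exact le_antisymm (rank_linearFormMatrix_le_six hx) (six_le_rank_linearFormMatrix hx)
end

section
/- Let ω₁ = e₁∧e₂ + e₃∧e₄, ω₂ = e₂∧e₃ + e₄∧e₅, ω₃ = e₁∧e₅ + e₂∧e₄ in Λ²ℂ⁵ (with e₁,…,e₅ the standard basis). Then no nonzero linear combination ω = aω₁ + bω₂ + cω₃ satisfies ω∧ω = 0 in Λ⁴ℂ⁵. -/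
/-!
The coefficients of `e₀∧e₁∧e₂∧e₃`, `e₁∧e₂∧e₃∧e₄` and `e₀∧e₁∧e₃∧e₄` in `ω ∧ ω`, for
`ω = a ω₁ + b ω₂ + c ω₃`, are `2a²`, `2b²` and `2(ab + c²)`. If `ω ∧ ω = 0` they all vanish,
forcing `a = b = 0` and then `c = 0`. The coefficients are read off with the linear forms
`x ↦ det (xᵢ(σⱼ))` on degree `n`, extended by zero to the whole exterior algebra.
-/

open ExteriorAlgebra

noncomputable def ee (i : Fin 5) : Fin 5 → ℂ := Pi.single i 1

/-- ω₁ = e₁∧e₂ + e₃∧e₄ (0-indexed as e₀∧e₁ + e₂∧e₃). -/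
noncomputable def ω₁ : ExteriorAlgebra ℂ (Fin 5 → ℂ) :=
  ι ℂ (ee 0) * ι ℂ (ee 1) + ι ℂ (ee 2) * ι ℂ (ee 3)

/-- ω₂ = e₂∧e₃ + e₄∧e₅. -/
noncomputable def ω₂ : ExteriorAlgebra ℂ (Fin 5 → ℂ) :=
  ι ℂ (ee 1) * ι ℂ (ee 2) + ι ℂ (ee 3) * ι ℂ (ee 4)

/-- ω₃ = e₁∧e₅ + e₂∧e₄. -/
noncomputable def ω₃ : ExteriorAlgebra ℂ (Fin 5 → ℂ) :=
  ι ℂ (ee 0) * ι ℂ (ee 4) + ι ℂ (ee 1) * ι ℂ (ee 3)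

namespace ExteriorAlgebra

variable {R : Type*} [CommRing R]

theorem ι_mul_ι_mul_ι_mul_ι_eq_ιMulti {M : Type*} [AddCommGroup M] [Module R M]
    (x y z w : M) : ι R x * ι R y * (ι R z * ι R w) = ιMulti R 4 ![x, y, z, w] := by
  simp [ιMulti_apply, mul_assoc]

/-- For strictly increasing `σ`, the coefficient of `e_{σ 0} ∧ ⋯ ∧ e_{σ (n-1)}`. -/
noncomputable def minor {κ : Type*} {n : ℕ} (σ : Fin n → κ) :
    ExteriorAlgebra R (κ → R) →ₗ[R] R :=
  liftAlternating fun k => if h : k = n then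
    Matrix.detRowAlternating.compLinearMap (LinearMap.funLeft R R (σ ∘ Fin.cast h)) else 0

theorem minor_ιMulti {κ : Type*} {n : ℕ} (σ : Fin n → κ) (v : Fin n → κ → R) :
    minor σ (ιMulti R n v) = (Matrix.of fun i j => v i (σ j)).det := by
  simp [minor, liftAlternating_apply_ιMulti, Matrix.detRowAlternating]
  rfl

end ExteriorAlgebra

noncomputable def ω (a b c : ℂ) : ExteriorAlgebra ℂ (Fin 5 → ℂ) := a • ω₁ + b • ω₂ + c • ω₃

set_option maxHeartbeats 1000000 in
theorem minor_ω_mul_ω (a b c : ℂ) :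
    minor ![0, 1, 2, 3] (ω a b c * ω a b c) = 2 * a ^ 2 ∧
      minor ![1, 2, 3, 4] (ω a b c * ω a b c) = 2 * b ^ 2 ∧
      minor ![0, 1, 3, 4] (ω a b c * ω a b c) = 2 * (a * b + c ^ 2) := by
  simp only [ω, ω₁, ω₂, ω₃, add_mul, mul_add, smul_mul_assoc, mul_smul_comm, map_add, map_smul,
    ι_mul_ι_mul_ι_mul_ι_eq_ιMulti, minor_ιMulti]
  refine ⟨?_, ?_, ?_⟩ <;>
    simp +decide [Matrix.det_succ_row_zero, Fin.sum_univ_succ, ee, Pi.single_apply] <;> ring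

theorem stmt4 (a b c : ℂ) (h : ¬(a = 0 ∧ b = 0 ∧ c = 0)) :
    (a • ω₁ + b • ω₂ + c • ω₃) * (a • ω₁ + b • ω₂ + c • ω₃) ≠ 0 := by
  intro hsq
  have hminor (σ : Fin 4 → Fin 5) : minor σ (ω a b c * ω a b c) = 0 := by
    rw [ω, hsq, map_zero]
  obtain ⟨h0123, h1234, h0134⟩ := minor_ω_mul_ω a b c
  rw [hminor] at h0123 h1234 h0134
  have ha : a = 0 := by simpa using h0123.symm
  have hb : b = 0 := by simpa using h1234.symm
  have hc : c = 0 := by simpa [ha] using h0134.symm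
  exact h ⟨ha, hb, hc⟩
end

section
/- Let V be a complex vector space, let ω ∈ Λ²V, and let u, v ∈ V be linearly independent. If ω∧u lies in the subspace v∧(Λ²V) of Λ³V, then there exist vectors α, β ∈ V such that ω = u∧α + v∧β. -/
/-!
Choose functionals `f, g` with `f u = 1`, `g u = 0`, `g v = 1`. Contraction `d⌋` with a functional
is an antiderivation of the exterior algebra. Contracting `ω ∧ u = v ∧ y` with `g` gives
`(g⌋ω) ∧ u = y - v ∧ (g⌋y)`, and wedging this with `v` shows `(ω - v ∧ g⌋ω) ∧ u = 0`.
Finally a 2-vector `ρ` with `ρ ∧ u = 0` is `u ∧ f⌋ρ`, as contracting `ρ ∧ u` with `f` shows.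
-/

open ExteriorAlgebra

namespace ExteriorAlgebra

open CliffordAlgebra (contractLeft contractLeft_ι contractLeft_ι_mul)

variable {R M : Type*} [CommRing R] [AddCommGroup M] [Module R M]

theorem ι_mul_ι_comm (x y : M) : ι R x * ι R y = -(ι R y * ι R x) :=
  eq_neg_of_add_eq_zero_left (ι_add_mul_swap x y)

theorem ι_mul_ι_mem_exteriorPower_two (x y : M) : ι R x * ι R y ∈ ⋀[R]^2 M := by
  rw [exteriorPower, pow_two]
  exact Submodule.mul_mem_mul (LinearMap.mem_range_self _ x) (LinearMap.mem_range_self _ y)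

theorem span_ι_mul_ι_le_exteriorPower_two :
    Submodule.span R {x : ExteriorAlgebra R M | ∃ a b : M, x = ι R a * ι R b} ≤ ⋀[R]^2 M :=
  Submodule.span_le.mpr fun _ ⟨a, b, hx⟩ ↦ hx ▸ ι_mul_ι_mem_exteriorPower_two a b

variable (d : Module.Dual R M) {x : ExteriorAlgebra R M}

theorem contractLeft_mem_range_ι_of_mem_exteriorPower_two (hx : x ∈ ⋀[R]^2 M) :
    contractLeft d x ∈ LinearMap.range (ι R) := by
  rw [exteriorPower, pow_two] at hx
  induction hx using Submodule.mul_induction_on' with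
  | mem_mul_mem a ha b hb =>
    obtain ⟨a, rfl⟩ := ha
    obtain ⟨b, rfl⟩ := hb
    refine ⟨d a • b - d b • a, ?_⟩
    simp [contractLeft_ι_mul, contractLeft_ι, Algebra.algebraMap_eq_smul_one]
  | add x _ y _ hx hy => rw [map_add]; exact add_mem hx hy

theorem contractLeft_mul_ι_of_mem_exteriorPower_two (w : M) (hx : x ∈ ⋀[R]^2 M) :
    contractLeft d (x * ι R w) = contractLeft d x * ι R w + d w • x := by
  rw [exteriorPower, pow_two] at hx
  induction hx using Submodule.mul_induction_on' with
  | mem_mul_mem a ha b hb =>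
    obtain ⟨a, rfl⟩ := ha
    obtain ⟨b, rfl⟩ := hb
    simp only [mul_assoc, contractLeft_ι_mul, contractLeft_ι, Algebra.algebraMap_eq_smul_one,
      mul_sub, sub_mul, smul_mul_assoc, mul_smul_comm, mul_one]
    module
  | add x _ y _ hx hy => rw [add_mul, map_add, hx, hy, map_add, add_mul, smul_add]; abel

theorem exists_eq_ι_mul_ι_of_mul_ι_eq_zero {u : M} (hx : x ∈ ⋀[R]^2 M) (hdu : d u = 1)
    (hxu : x * ι R u = 0) : ∃ a : M, x = ι R u * ι R a := by
  obtain ⟨a, ha⟩ := contractLeft_mem_range_ι_of_mem_exteriorPower_two d hx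
  have hLeibniz := contractLeft_mul_ι_of_mem_exteriorPower_two d u hx
  rw [hxu, map_zero, ← ha, hdu, one_smul, ι_mul_ι_comm] at hLeibniz
  exact ⟨a, (neg_add_eq_zero.mp hLeibniz.symm).symm⟩

theorem sub_ι_mul_contractLeft_mul_ι_eq_zero {u v : M} {y : ExteriorAlgebra R M}
    (hx : x ∈ ⋀[R]^2 M) (hdu : d u = 0) (hdv : d v = 1) (hxu : x * ι R u = ι R v * y) :
    (x - ι R v * contractLeft d x) * ι R u = 0 := by
  have hLeibniz := contractLeft_mul_ι_of_mem_exteriorPower_two d u hx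
  rw [hxu, contractLeft_ι_mul, hdu, hdv, zero_smul, add_zero, one_smul] at hLeibniz
  rw [sub_mul, mul_assoc, ← hLeibniz, mul_sub, ← mul_assoc, ι_sq_zero, zero_mul, sub_zero, hxu,
    sub_self]

end ExteriorAlgebra

theorem Module.exists_dual_apply_eq_zero_apply_eq_one {K V : Type*} [Field K] [AddCommGroup V]
    [Module K V] {u v : V} (huv : LinearIndependent K ![u, v]) :
    ∃ g : Module.Dual K V, g u = 0 ∧ g v = 1 := by
  have hv : v ∉ Submodule.span K {u} := by
    have hcompl : ({1}ᶜ : Set (Fin 2)) = {0} := by ext i; fin_cases i <;> simp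
    simpa [hcompl] using huv.notMem_span 1
  obtain ⟨g, hgv, hgu⟩ := Submodule.exists_dual_map_eq_bot_of_notMem hv inferInstance
  refine ⟨(g v)⁻¹ • g, ?_, inv_mul_cancel₀ hgv⟩
  rw [Submodule.map_span, Set.image_singleton, Submodule.span_singleton_eq_bot] at hgu
  simp [hgu]

theorem stmt7_general (V : Type*) [AddCommGroup V] [Module ℂ V]
    (ω : ExteriorAlgebra ℂ V)
    (hω : ω ∈ Submodule.span ℂ
      {x : ExteriorAlgebra ℂ V | ∃ a b : V, x = ι ℂ a * ι ℂ b})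
    (u v : V) (huv : LinearIndependent ℂ ![u, v])
    (h : ∃ y ∈ Submodule.span ℂ
        {x : ExteriorAlgebra ℂ V | ∃ a b : V, x = ι ℂ a * ι ℂ b},
      ω * ι ℂ u = ι ℂ v * y) :
    ∃ α β : V, ω = ι ℂ u * ι ℂ α + ι ℂ v * ι ℂ β := by
  obtain ⟨y, -, hωu⟩ := h
  replace hω := span_ι_mul_ι_le_exteriorPower_two hω
  have hu : u ≠ 0 := huv.ne_zero 0
  obtain ⟨f, hfu⟩ := Module.Projective.exists_dual_eq_one ℂ hu
  obtain ⟨g, hgu, hgv⟩ := Module.exists_dual_apply_eq_zero_apply_eq_one huv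
  obtain ⟨β, hβ⟩ := contractLeft_mem_range_ι_of_mem_exteriorPower_two g hω
  have hρ : ω - ι ℂ v * ι ℂ β ∈ ⋀[ℂ]^2 V := sub_mem hω (ι_mul_ι_mem_exteriorPower_two v β)
  obtain ⟨α, hα⟩ := exists_eq_ι_mul_ι_of_mul_ι_eq_zero f hρ hfu
    (hβ ▸ sub_ι_mul_contractLeft_mul_ι_eq_zero g hω hgu hgv hωu)
  exact ⟨α, β, by rw [← hα, sub_add_cancel]⟩

theorem stmt7 (V : Type*) [AddCommGroup V] [Module ℂ V] [FiniteDimensional ℂ V]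
    (ω : ExteriorAlgebra ℂ V)
    (hω : ω ∈ Submodule.span ℂ
      {x : ExteriorAlgebra ℂ V | ∃ a b : V, x = ι ℂ a * ι ℂ b})
    (u v : V) (huv : LinearIndependent ℂ ![u, v])
    (h : ∃ y ∈ Submodule.span ℂ
        {x : ExteriorAlgebra ℂ V | ∃ a b : V, x = ι ℂ a * ι ℂ b},
      ω * ι ℂ u = ι ℂ v * y) :
    ∃ α β : V, ω = ι ℂ u * ι ℂ α + ι ℂ v * ι ℂ β :=
  stmt7_general V ω hω u v huv h
end

section
/- Let V = ℂ³ with basis e₀, e₁, e₂ and dual basis x₀, x₁, x₂, and let H ⊂ S²V* be the 5-dimensional space of quadratic forms apolar to the tensor t = e₀e₁ + e₂², namely H = span{x₀x₁ − x₂², x₀x₂, x₁x₂, x₀², x₁²}. If C ∈ S³V is a cubic symmetric tensor such that for every Q ∈ H the contraction Q ⌟ C is a scalar multiple of e₀, then C is a scalar multiple of e₀³. -/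
open MvPolynomial

/-- Iterated partial derivative `∏ᵢ ∂ᵢ^{α i}` applied to `T`. -/
noncomputable def monomialDeriv {m : ℕ} (α : Fin m →₀ ℕ) (T : MvPolynomial (Fin m) ℂ) :
    MvPolynomial (Fin m) ℂ :=
  (List.finRange m).foldl (fun p i => (fun q => MvPolynomial.pderiv i q)^[α i] p) T

noncomputable def contract {m : ℕ} (Q T : MvPolynomial (Fin m) ℂ) :
    MvPolynomial (Fin m) ℂ :=
  Q.support.sum fun α => Q.coeff α • monomialDeriv α T

/-- The 5-dimensional space of quadrics apolar to `t = e₀e₁ + e₂²`. -/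
noncomputable def Hspan : Submodule ℂ (MvPolynomial (Fin 3) ℂ) :=
  Submodule.span ℂ {X 0 * X 1 - X 2 ^ 2, X 0 * X 2, X 1 * X 2, X 0 ^ 2, X 1 ^ 2}

/-! ### Auxiliary lemmas -/

/-- Canonical exponent vector. -/
noncomputable def Evec (a b c : ℕ) : Fin 3 →₀ ℕ :=
  Finsupp.single 0 a + Finsupp.single 1 b + Finsupp.single 2 c

lemma Evec_apply0 (a b c : ℕ) : Evec a b c 0 = a := by simp [Evec]
lemma Evec_apply1 (a b c : ℕ) : Evec a b c 1 = b := by simp [Evec]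
lemma Evec_apply2 (a b c : ℕ) : Evec a b c 2 = c := by simp [Evec]

lemma coeff_pderiv' (i : Fin 3) (p : MvPolynomial (Fin 3) ℂ) (α : Fin 3 →₀ ℕ) :
    coeff α (pderiv i p) = (α i + 1 : ℂ) * coeff (α + Finsupp.single i 1) p := by
  induction p using MvPolynomial.induction_on' with
  | monomial s a =>
    rw [pderiv_monomial]
    rcases Nat.eq_zero_or_pos (s i) with hs | hs
    · have hne : s ≠ α + Finsupp.single i 1 := by
        intro hh
        have := congrArg (fun f => f i) hh
        simp [hs] at this
      simp [coeff_monomial, hs, hne]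
    · have key : (α = s - Finsupp.single i 1) ↔ (s = α + Finsupp.single i 1) := by
        constructor
        · rintro rfl
          ext j
          rcases eq_or_ne j i with rfl | hj
          · simp [Finsupp.tsub_apply, Nat.sub_add_cancel hs]
          · simp [Finsupp.tsub_apply, Finsupp.single_apply, Ne.symm hj]
        · rintro rfl
          ext j
          rcases eq_or_ne j i with rfl | hj
          · simp [Finsupp.tsub_apply]
          · simp [Finsupp.tsub_apply, Finsupp.single_apply, Ne.symm hj]
      rcases eq_or_ne α (s - Finsupp.single i 1) with heq | hne
      · have h2 : α i + 1 = s i := by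
          rw [heq]; simp [Finsupp.tsub_apply, Nat.sub_add_cancel hs]
        rw [coeff_monomial, if_pos heq.symm, coeff_monomial, if_pos (key.mp heq)]
        push_cast [← h2]
        ring
      · rw [coeff_monomial, if_neg (fun hh => hne hh.symm), coeff_monomial,
          if_neg (fun hh => hne (key.mpr hh))]
        ring
  | add p q hp hq => simp [hp, hq, mul_add]

lemma contract_eq_sum_of_subset {m : ℕ} (Q T : MvPolynomial (Fin m) ℂ)
    (s : Finset (Fin m →₀ ℕ)) (hs : Q.support ⊆ s) :
    contract Q T = s.sum fun α => Q.coeff α • monomialDeriv α T := by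
  classical
  exact Finset.sum_subset hs (by
    intro α _ hα
    rw [MvPolynomial.notMem_support_iff.mp hα, zero_smul])

lemma contract_add {m : ℕ} (Q R T : MvPolynomial (Fin m) ℂ) :
    contract (Q + R) T = contract Q T + contract R T := by
  classical
  rw [contract_eq_sum_of_subset (Q + R) T (Q.support ∪ R.support)
      (MvPolynomial.support_add),
    contract_eq_sum_of_subset Q T (Q.support ∪ R.support) Finset.subset_union_left,
    contract_eq_sum_of_subset R T (Q.support ∪ R.support) Finset.subset_union_right,
    ← Finset.sum_add_distrib]
  refine Finset.sum_congr rfl fun α _ => ?_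
  rw [coeff_add, add_smul]

lemma contract_neg {m : ℕ} (Q T : MvPolynomial (Fin m) ℂ) :
    contract (-Q) T = - contract Q T := by
  rw [contract, contract, MvPolynomial.support_neg, ← Finset.sum_neg_distrib]
  refine Finset.sum_congr rfl fun α _ => ?_
  rw [coeff_neg, neg_smul]

lemma contract_sub {m : ℕ} (Q R T : MvPolynomial (Fin m) ℂ) :
    contract (Q - R) T = contract Q T - contract R T := by
  rw [sub_eq_add_neg, contract_add, contract_neg, sub_eq_add_neg]

lemma contract_monomial {m : ℕ} (α : Fin m →₀ ℕ) (c : ℂ) (T : MvPolynomial (Fin m) ℂ) :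
    contract (monomial α c) T = c • monomialDeriv α T := by
  rcases eq_or_ne c 0 with rfl | hc
  · simp [contract]
  · rw [contract, support_monomial, if_neg hc, Finset.sum_singleton, coeff_monomial, if_pos rfl]

lemma md3 (α : Fin 3 →₀ ℕ) (T : MvPolynomial (Fin 3) ℂ) :
    monomialDeriv α T =
      (fun q => pderiv 2 q)^[α 2] ((fun q => pderiv 1 q)^[α 1] ((fun q => pderiv 0 q)^[α 0] T)) := by
  have h3 : List.finRange 3 = [0, 1, 2] := by decide
  rw [monomialDeriv, h3]
  simp [List.foldl]

/-- From `pderiv j (pderiv i C) = a • X 0` and `β ≠ e₀`, the coefficient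
of `C` at `β + eⱼ + eᵢ` vanishes. -/
lemma key_coeff (i j : Fin 3) (C : MvPolynomial (Fin 3) ℂ) (a : ℂ) (β : Fin 3 →₀ ℕ)
    (hβ : Finsupp.single 0 1 ≠ β)
    (hEq : pderiv j (pderiv i C) = a • (X 0 : MvPolynomial (Fin 3) ℂ)) :
    coeff (β + Finsupp.single j 1 + Finsupp.single i 1) C = 0 := by
  have hc := congrArg (coeff β) hEq
  rw [coeff_pderiv', coeff_pderiv', coeff_smul, coeff_X', if_neg hβ, smul_zero] at hc
  set γ := β + Finsupp.single j 1 with hγ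
  have h1 : ((β j : ℂ) + 1) ≠ 0 := Nat.cast_add_one_ne_zero (β j)
  have h2 : ((γ j : ℂ) + 1) ≠ 0 := Nat.cast_add_one_ne_zero (γ j)
  have h2' : ((γ i : ℂ) + 1) ≠ 0 := Nat.cast_add_one_ne_zero (γ i)
  rcases mul_eq_zero.mp hc with h' | h'
  · exact absurd h' h1
  · rcases mul_eq_zero.mp h' with h'' | h''
    · exact absurd h'' h2'
    · exact h''

theorem stmt16 (C : MvPolynomial (Fin 3) ℂ) (hC : C.IsHomogeneous 3)
    (h : ∀ Q ∈ Hspan, ∃ a : ℂ, contract Q C = a • (X 0 : MvPolynomial (Fin 3) ℂ)) :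
    ∃ a : ℂ, C = a • (X 0 : MvPolynomial (Fin 3) ℂ) ^ 3 := by
  classical
  -- rewrite the generators as monomials
  have e01 : (X 0 * X 1 : MvPolynomial (Fin 3) ℂ)
      = monomial (Finsupp.single 0 1 + Finsupp.single 1 1) 1 := by
    rw [X, X, monomial_mul, one_mul]
  have e02 : (X 0 * X 2 : MvPolynomial (Fin 3) ℂ)
      = monomial (Finsupp.single 0 1 + Finsupp.single 2 1) 1 := by
    rw [X, X, monomial_mul, one_mul]
  have e12 : (X 1 * X 2 : MvPolynomial (Fin 3) ℂ)
      = monomial (Finsupp.single 1 1 + Finsupp.single 2 1) 1 := by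
    rw [X, X, monomial_mul, one_mul]
  have e00 : (X 0 ^ 2 : MvPolynomial (Fin 3) ℂ) = monomial (Finsupp.single 0 2) 1 :=
    X_pow_eq_monomial
  have e11 : (X 1 ^ 2 : MvPolynomial (Fin 3) ℂ) = monomial (Finsupp.single 1 2) 1 :=
    X_pow_eq_monomial
  have e22 : (X 2 ^ 2 : MvPolynomial (Fin 3) ℂ) = monomial (Finsupp.single 2 2) 1 :=
    X_pow_eq_monomial
  -- extract the five equations
  obtain ⟨a1, ha1⟩ := h (X 0 * X 1 - X 2 ^ 2) (Submodule.subset_span (by simp))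
  obtain ⟨a2, ha2⟩ := h (X 0 * X 2) (Submodule.subset_span (by simp))
  obtain ⟨a3, ha3⟩ := h (X 1 * X 2) (Submodule.subset_span (by simp))
  obtain ⟨a4, ha4⟩ := h (X 0 ^ 2) (Submodule.subset_span (by simp))
  obtain ⟨a5, ha5⟩ := h (X 1 ^ 2) (Submodule.subset_span (by simp))
  -- turn them into derivative equations
  have md01 : monomialDeriv (Finsupp.single 0 1 + Finsupp.single 1 1) C
      = pderiv 1 (pderiv 0 C) := by
    rw [md3]; simp [Finsupp.single_apply]
  have md02 : monomialDeriv (Finsupp.single 0 1 + Finsupp.single 2 1) C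
      = pderiv 2 (pderiv 0 C) := by
    rw [md3]; simp [Finsupp.single_apply]
  have md12 : monomialDeriv (Finsupp.single 1 1 + Finsupp.single 2 1) C
      = pderiv 2 (pderiv 1 C) := by
    rw [md3]; simp [Finsupp.single_apply]
  have md00 : monomialDeriv (Finsupp.single 0 2) C = pderiv 0 (pderiv 0 C) := by
    rw [md3]
    simp [Finsupp.single_apply, Function.iterate_succ', Function.iterate_one]
  have md11 : monomialDeriv (Finsupp.single 1 2) C = pderiv 1 (pderiv 1 C) := by
    rw [md3]
    simp [Finsupp.single_apply, Function.iterate_succ', Function.iterate_one]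
  have md22 : monomialDeriv (Finsupp.single 2 2) C = pderiv 2 (pderiv 2 C) := by
    rw [md3]
    simp [Finsupp.single_apply, Function.iterate_succ', Function.iterate_one]
  have E1 : pderiv 1 (pderiv 0 C) - pderiv 2 (pderiv 2 C)
      = a1 • (X 0 : MvPolynomial (Fin 3) ℂ) := by
    have hh : contract (X 0 * X 1 - X 2 ^ 2) C
        = pderiv 1 (pderiv 0 C) - pderiv 2 (pderiv 2 C) := by
      rw [e01, e22, contract_sub, contract_monomial, contract_monomial, md01, md22,
        one_smul, one_smul]
    rw [← hh]; exact ha1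
  have E2 : pderiv 2 (pderiv 0 C) = a2 • (X 0 : MvPolynomial (Fin 3) ℂ) := by
    rw [← one_smul ℂ (pderiv 2 (pderiv 0 C)), ← md02, ← contract_monomial, ← e02]; exact ha2
  have E3 : pderiv 2 (pderiv 1 C) = a3 • (X 0 : MvPolynomial (Fin 3) ℂ) := by
    rw [← one_smul ℂ (pderiv 2 (pderiv 1 C)), ← md12, ← contract_monomial, ← e12]; exact ha3
  have E4 : pderiv 0 (pderiv 0 C) = a4 • (X 0 : MvPolynomial (Fin 3) ℂ) := by
    rw [← one_smul ℂ (pderiv 0 (pderiv 0 C)), ← md00, ← contract_monomial, ← e00]; exact ha4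
  have E5 : pderiv 1 (pderiv 1 C) = a5 • (X 0 : MvPolynomial (Fin 3) ℂ) := by
    rw [← one_smul ℂ (pderiv 1 (pderiv 1 C)), ← md11, ← contract_monomial, ← e11]; exact ha5
  -- β ≠ e₀ facts
  have hb1 : (Finsupp.single 0 1 : Fin 3 →₀ ℕ) ≠ Finsupp.single 1 1 := by
    intro hh; have := congrArg (fun f => f (0 : Fin 3)) hh; simp at this
  have hb2 : (Finsupp.single 0 1 : Fin 3 →₀ ℕ) ≠ Finsupp.single 2 1 := by
    intro hh; have := congrArg (fun f => f (0 : Fin 3)) hh; simp at this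
  -- the nine vanishing coefficients, in canonical form
  have heq210 : (Finsupp.single 1 1 + Finsupp.single 0 1 + Finsupp.single 0 1 : Fin 3 →₀ ℕ)
      = Evec 2 1 0 := by ext j; fin_cases j <;> simp [Evec, Finsupp.single_apply]
  have heq201 : (Finsupp.single 2 1 + Finsupp.single 0 1 + Finsupp.single 0 1 : Fin 3 →₀ ℕ)
      = Evec 2 0 1 := by ext j; fin_cases j <;> simp [Evec, Finsupp.single_apply]
  have heq030 : (Finsupp.single 1 1 + Finsupp.single 1 1 + Finsupp.single 1 1 : Fin 3 →₀ ℕ)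
      = Evec 0 3 0 := by ext j; fin_cases j <;> simp [Evec, Finsupp.single_apply]
  have heq021 : (Finsupp.single 2 1 + Finsupp.single 1 1 + Finsupp.single 1 1 : Fin 3 →₀ ℕ)
      = Evec 0 2 1 := by ext j; fin_cases j <;> simp [Evec, Finsupp.single_apply]
  have heq111 : (Finsupp.single 1 1 + Finsupp.single 2 1 + Finsupp.single 0 1 : Fin 3 →₀ ℕ)
      = Evec 1 1 1 := by ext j; fin_cases j <;> simp [Evec, Finsupp.single_apply]
  have heq102 : (Finsupp.single 2 1 + Finsupp.single 2 1 + Finsupp.single 0 1 : Fin 3 →₀ ℕ)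
      = Evec 1 0 2 := by ext j; fin_cases j <;> simp [Evec, Finsupp.single_apply]
  have heq012 : (Finsupp.single 2 1 + Finsupp.single 2 1 + Finsupp.single 1 1 : Fin 3 →₀ ℕ)
      = Evec 0 1 2 := by ext j; fin_cases j <;> simp [Evec, Finsupp.single_apply]
  have heq120 : (Finsupp.single 1 1 + Finsupp.single 1 1 + Finsupp.single 0 1 : Fin 3 →₀ ℕ)
      = Evec 1 2 0 := by ext j; fin_cases j <;> simp [Evec, Finsupp.single_apply]
  have heq003 : (Finsupp.single 2 1 + Finsupp.single 2 1 + Finsupp.single 2 1 : Fin 3 →₀ ℕ)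
      = Evec 0 0 3 := by ext j; fin_cases j <;> simp [Evec, Finsupp.single_apply]
  have heq300 : (Finsupp.single 0 3 : Fin 3 →₀ ℕ) = Evec 3 0 0 := by
    ext j; fin_cases j <;> simp [Evec, Finsupp.single_apply]
  have c210 : coeff (Evec 2 1 0) C = 0 := heq210 ▸ key_coeff 0 0 C a4 _ hb1 E4
  have c201 : coeff (Evec 2 0 1) C = 0 := heq201 ▸ key_coeff 0 0 C a4 _ hb2 E4
  have c030 : coeff (Evec 0 3 0) C = 0 := heq030 ▸ key_coeff 1 1 C a5 _ hb1 E5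
  have c021 : coeff (Evec 0 2 1) C = 0 := heq021 ▸ key_coeff 1 1 C a5 _ hb2 E5
  have c111 : coeff (Evec 1 1 1) C = 0 := heq111 ▸ key_coeff 0 2 C a2 _ hb1 E2
  have c102 : coeff (Evec 1 0 2) C = 0 := heq102 ▸ key_coeff 0 2 C a2 _ hb2 E2
  have c012 : coeff (Evec 0 1 2) C = 0 := heq012 ▸ key_coeff 1 2 C a3 _ hb2 E3
  -- c120 from E1 evaluated at β = e₁
  have c120 : coeff (Evec 1 2 0) C = 0 := by
    have hc := congrArg (coeff (Finsupp.single 1 1)) E1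
    rw [coeff_sub, coeff_pderiv', coeff_pderiv', coeff_pderiv', coeff_pderiv',
      coeff_smul, coeff_X', if_neg hb1, smul_zero, sub_eq_zero] at hc
    have hA : (Finsupp.single 1 1 + Finsupp.single 2 1 + Finsupp.single 2 1 : Fin 3 →₀ ℕ)
        = Evec 0 1 2 := by ext j; fin_cases j <;> simp [Evec, Finsupp.single_apply]
    have hB : (Finsupp.single 1 1 + Finsupp.single 1 1 + Finsupp.single 0 1 : Fin 3 →₀ ℕ)
        = Evec 1 2 0 := by ext j; fin_cases j <;> simp [Evec, Finsupp.single_apply]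
    rw [hA, hB, c012, mul_zero, mul_zero] at hc
    have h1 : (((Finsupp.single 1 1 : Fin 3 →₀ ℕ) 1 : ℂ) + 1) ≠ 0 :=
      Nat.cast_add_one_ne_zero _
    have h2 : (((Finsupp.single 1 1 + Finsupp.single 1 1 : Fin 3 →₀ ℕ) 0 : ℂ) + 1) ≠ 0 :=
      Nat.cast_add_one_ne_zero _
    rcases mul_eq_zero.mp hc with h' | h'
    · exact absurd h' h1
    · rcases mul_eq_zero.mp h' with h'' | h''
      · exact absurd h'' h2
      · exact h''
  -- c003 from E1 evaluated at β = e₂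
  have c003 : coeff (Evec 0 0 3) C = 0 := by
    have hc := congrArg (coeff (Finsupp.single 2 1)) E1
    rw [coeff_sub, coeff_pderiv', coeff_pderiv', coeff_pderiv', coeff_pderiv',
      coeff_smul, coeff_X', if_neg hb2, smul_zero, sub_eq_zero] at hc
    have hA : (Finsupp.single 2 1 + Finsupp.single 1 1 + Finsupp.single 0 1 : Fin 3 →₀ ℕ)
        = Evec 1 1 1 := by ext j; fin_cases j <;> simp [Evec, Finsupp.single_apply]
    have hB : (Finsupp.single 2 1 + Finsupp.single 2 1 + Finsupp.single 2 1 : Fin 3 →₀ ℕ)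
        = Evec 0 0 3 := by ext j; fin_cases j <;> simp [Evec, Finsupp.single_apply]
    rw [hA, hB, c111, mul_zero, mul_zero] at hc
    have h1 : (((Finsupp.single 2 1 : Fin 3 →₀ ℕ) 2 : ℂ) + 1) ≠ 0 :=
      Nat.cast_add_one_ne_zero _
    have h2 : (((Finsupp.single 2 1 + Finsupp.single 2 1 : Fin 3 →₀ ℕ) 2 : ℂ) + 1) ≠ 0 :=
      Nat.cast_add_one_ne_zero _
    rcases mul_eq_zero.mp hc.symm with h' | h'
    · exact absurd h' h1
    · rcases mul_eq_zero.mp h' with h'' | h''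
      · exact absurd h'' h2
      · exact h''
  -- conclude
  refine ⟨coeff (Finsupp.single 0 3) C, ?_⟩
  apply MvPolynomial.ext
  intro α
  rw [coeff_smul, X_pow_eq_monomial, coeff_monomial, smul_eq_mul]
  rcases eq_or_ne (Finsupp.single 0 3 : Fin 3 →₀ ℕ) α with rfl | hne
  · rw [if_pos rfl, mul_one]
  · rw [if_neg hne, mul_zero]
    by_cases hdeg : α.degree = 3
    swap
    · exact hC.coeff_eq_zero hdeg
    have hsum0 : α 0 + α 1 + α 2 = 3 := by
      have hd : α.degree = α 0 + α 1 + α 2 := by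
        rw [Finsupp.degree_apply]
        rw [Finset.sum_subset (Finset.subset_univ _)
          (fun i _ hi => Finsupp.notMem_support_iff.mp hi)]
        simp [Fin.sum_univ_three]
      omega
    have hα0 : α = Evec (α 0) (α 1) (α 2) := by
      ext j
      fin_cases j <;> simp [Evec, Finsupp.single_apply]
    obtain ⟨n0, n1, n2, hα, hsum⟩ :
        ∃ n0 n1 n2, α = Evec n0 n1 n2 ∧ n0 + n1 + n2 = 3 :=
      ⟨α 0, α 1, α 2, hα0, hsum0⟩
    have hn0 : n0 ≤ 3 := by omega
    have hn1 : n1 ≤ 3 := by omega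
    have hn2 : n2 ≤ 3 := by omega
    subst hα
    interval_cases n0 <;> interval_cases n1 <;> interval_cases n2
    any_goals omega
    exacts [absurd heq300 hne]
end

section
/- Let V = ℂ^{n+1} (n ≥ 2) with basis e₀,…,e_n and dual basis x₀,…,x_n, and let P ⊂ S²V* be the hyperplane of quadratic forms apolar to the rank-two tensor t = e₀e₁. Then the cubic C = e₀e₁² ∈ S³V is not a multiple of e₀³, yet for every Q ∈ P the contraction Q ⌟ C is a scalar multiple of e₀. -/
open MvPolynomial

/-!
On a monomial, `monomialDeriv α` acts by `∂^α x^β = (∏ᵢ β_i (β_i - 1) ⋯ (β_i - α_i + 1)) x^(β - α)`,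
so it vanishes unless `α ≤ β`. The only degree-two exponents below `x₀x₁²` are those of `x₀x₁`
and `x₁²`; hence a quadric `Q` contracts `x₀x₁²` to `2 Q_{x₁²} x₀ + 2 Q_{x₀x₁} x₁`, and apolarity
to `e₀e₁` kills the second term.
-/

section

open Finsupp

theorem iterate_pderiv_monomial {σ R : Type*} [CommSemiring R] (i : σ) (k : ℕ) (s : σ →₀ ℕ)
    (c : R) :
    (fun q => pderiv i q)^[k] (monomial s c) =
      monomial (s - single i k) (c * (s i).descFactorial k) := by
  classical
  induction k with
  | zero => simp
  | succ k ih =>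
    rw [Function.iterate_succ_apply', ih, pderiv_monomial, single_add, tsub_tsub,
      tsub_apply, single_eq_same, Nat.descFactorial_succ]
    congr 1
    push_cast
    ring

theorem foldl_iterate_pderiv_monomial {σ R : Type*} [CommSemiring R] (a : σ → ℕ) {l : List σ}
    (hl : l.Nodup) (s : σ →₀ ℕ) (c : R) :
    l.foldl (fun p i => (fun q => pderiv i q)^[a i] p) (monomial s c) =
      monomial (s - (l.map fun i => single i (a i)).sum)
        (c * (l.map fun i => ((s i).descFactorial (a i) : R)).prod) := by
  classical
  induction l generalizing s c with
  | nil => simp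
  | cons i t ih =>
    rw [List.nodup_cons] at hl
    have hs : (t.map fun j => (((s - single i (a i)) j).descFactorial (a j) : R)) =
        t.map fun j => ((s j).descFactorial (a j) : R) :=
      List.map_congr_left fun j hj => by simp [single_eq_of_ne (ne_of_mem_of_not_mem hj hl.1)]
    rw [List.foldl_cons, iterate_pderiv_monomial, ih hl.2, hs]
    simp [tsub_tsub, mul_assoc]

theorem monomialDeriv_monomial {m : ℕ} (α s : Fin m →₀ ℕ) (c : ℂ) :
    monomialDeriv α (monomial s c) =
      monomial (s - α) (c * α.prod fun i k => ((s i).descFactorial k : ℂ)) := by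
  rw [monomialDeriv, foldl_iterate_pderiv_monomial _ (List.nodup_finRange m), ← Fin.sum_univ_def,
    ← Fin.prod_univ_def, univ_sum_single, prod_fintype _ _ (by simp)]

theorem monomialDeriv_monomial_of_not_le {m : ℕ} {α s : Fin m →₀ ℕ} (h : ¬ α ≤ s) (c : ℂ) :
    monomialDeriv α (monomial s c) = 0 := by
  obtain ⟨i, hi⟩ : ∃ i, s i < α i := by simpa [le_def] using h
  have : α.prod (fun i k => ((s i).descFactorial k : ℂ)) = 0 :=
    Finset.prod_eq_zero (i := i) (Finsupp.mem_support_iff.mpr (by omega))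
      (by simp [Nat.descFactorial_eq_zero_iff_lt.mpr hi])
  rw [monomialDeriv_monomial, this, mul_zero, monomial_zero]

theorem X_mul_X_sq_eq_monomial {σ R : Type*} [CommSemiring R] (i j : σ) :
    (X i * X j ^ 2 : MvPolynomial σ R) = monomial (single i 1 + single j 2) 1 := by
  rw [X_pow_eq_monomial, X, monomial_mul, one_mul]

theorem eq_or_eq_of_le_of_degree_eq_two {σ : Type*} {i j : σ} (hij : i ≠ j) {α : σ →₀ ℕ}
    (hle : α ≤ single i 1 + single j 2) (hdeg : α.degree = 2) :
    α = single i 1 + single j 1 ∨ α = single j 2 := by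
  classical
  have hle' := le_def.mp hle
  have hout : ∀ k, k ≠ i → k ≠ j → α k = 0 := fun k hki hkj => by
    simpa [single_apply, hki.symm, hkj.symm] using hle' k
  have hsupp : α.support ⊆ {i, j} := fun k hk => by
    by_contra h
    simp only [Finset.mem_insert, Finset.mem_singleton, not_or] at h
    exact mem_support_iff.mp hk (hout k h.1 h.2)
  have hsum : α i + α j = 2 := by
    rw [← hdeg, degree, ← Finset.sum_pair hij]
    exact (Finset.sum_subset hsupp fun k _ hk => notMem_support_iff.mp hk).symm
  have hα : α = single i (α i) + single j (α j) := by
    ext k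
    by_cases hki : k = i
    · subst hki; simp [single_eq_of_ne hij]
    by_cases hkj : k = j
    · subst hkj; simp [single_eq_of_ne hij.symm]
    simp [hout k hki hkj, single_eq_of_ne hki, single_eq_of_ne hkj]
  have hi := hle' i
  have hj := hle' j
  simp only [Finsupp.coe_add, Pi.add_apply, single_eq_same, single_eq_of_ne hij,
    single_eq_of_ne hij.symm] at hi hj
  rcases (by omega : (α i = 1 ∧ α j = 1) ∨ (α i = 0 ∧ α j = 2)) with ⟨hi, hj⟩ | ⟨hi, hj⟩
  · left; rwa [hi, hj] at hα
  · right; rwa [hi, hj, single_zero, zero_add] at hα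

theorem X_mul_X_sq_ne_smul_X_pow_three {σ R : Type*} [CommSemiring R] [Nontrivial R] {i j : σ}
    (hij : i ≠ j) (a : R) : X i * X j ^ 2 ≠ a • (X i : MvPolynomial σ R) ^ 3 := by
  classical
  intro h
  have hne : single i 3 ≠ single i 1 + single j 2 := fun h' => by
    simpa [single_eq_of_ne hij.symm] using DFunLike.congr_fun h' j
  have := congrArg (coeff (single i 1 + single j 2)) h
  rw [X_mul_X_sq_eq_monomial, X_pow_eq_monomial, coeff_smul, coeff_monomial, coeff_monomial,
    if_pos rfl, if_neg hne, smul_zero] at this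
  exact one_ne_zero this

theorem contract_X_mul_X_sq {m : ℕ} {i j : Fin m} (hij : i ≠ j) {Q : MvPolynomial (Fin m) ℂ}
    (hQ : Q.IsHomogeneous 2) :
    contract Q (X i * X j ^ 2) =
      (2 * coeff (single j 2) Q) • X i + (2 * coeff (single i 1 + single j 1) Q) • X j := by
  classical
  set β := single i 1 + single j 2
  set D := fun α => Q.coeff α • monomialDeriv α (monomial β 1)
  have hD : ∀ α ∈ Q.support, α ∉ ({single i 1 + single j 1, single j 2} : Finset _) →
      D α = 0 := by
    intro α hα hαS
    suffices ¬ α ≤ β by simp only [D, monomialDeriv_monomial_of_not_le this, smul_zero]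
    intro hle
    have hdeg : α.degree = 2 := by
      by_contra h
      exact MvPolynomial.mem_support_iff.mp hα (hQ.coeff_eq_zero h)
    simp only [Finset.mem_insert, Finset.mem_singleton, not_or] at hαS
    rcases eq_or_eq_of_le_of_degree_eq_two hij hle hdeg with h | h
    exacts [hαS.1 h, hαS.2 h]
  have hne : single i 1 + single j 1 ≠ single j 2 := fun h => by
    simpa [single_eq_of_ne hij] using DFunLike.congr_fun h i
  have hD₁ :
      monomialDeriv (single i 1 + single j 1) (monomial β 1) = monomial (single j 1) 2 := by
    have hβ : β = single i 1 + single j 1 + single j 1 := by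
      rw [add_assoc, ← single_add]
    rw [monomialDeriv_monomial, hβ, add_tsub_cancel_left,
      prod_add_index_of_disjoint ((support_single_disjoint one_ne_zero one_ne_zero).mpr hij),
      prod_single_index (by simp), prod_single_index (by simp)]
    norm_num [single_eq_of_ne hij, single_eq_of_ne hij.symm]
  have hD₂ : monomialDeriv (single j 2) (monomial β 1) = monomial (single i 1) 2 := by
    rw [monomialDeriv_monomial, add_tsub_cancel_right, prod_single_index (by simp)]
    norm_num [β, single_eq_of_ne hij.symm, Nat.descFactorial]
  calc contract Q (X i * X j ^ 2)
      = ∑ α ∈ Q.support ∪ {single i 1 + single j 1, single j 2}, D α := by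
        rw [X_mul_X_sq_eq_monomial]
        exact Finset.sum_subset Finset.subset_union_left fun α _ hα => by
          simp only [MvPolynomial.notMem_support_iff.mp hα, zero_smul]
    _ = ∑ α ∈ {single i 1 + single j 1, single j 2}, D α :=
        (Finset.sum_subset Finset.subset_union_right fun α hα hαS =>
          hD α ((Finset.mem_union.mp hα).resolve_right hαS) hαS).symm
    _ = _ := by
        rw [Finset.sum_pair hne]
        simp only [D]
        rw [hD₁, hD₂, add_comm]
        simp only [X, smul_monomial, smul_eq_mul, mul_one]
        rw [mul_comm (coeff _ Q), mul_comm (coeff _ Q)]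

end

theorem stmt17 (n : ℕ) (hn : 2 ≤ n) :
    (¬ ∃ a : ℂ, (X 0 * X 1 ^ 2 : MvPolynomial (Fin (n + 1)) ℂ) =
        a • (X 0 : MvPolynomial (Fin (n + 1)) ℂ) ^ 3) ∧
    ∀ Q : MvPolynomial (Fin (n + 1)) ℂ, Q.IsHomogeneous 2 →
      MvPolynomial.coeff (Finsupp.single 0 1 + Finsupp.single 1 1) Q = 0 →
      ∃ a : ℂ, contract Q (X 0 * X 1 ^ 2) =
        a • (X 0 : MvPolynomial (Fin (n + 1)) ℂ) := by
  have h01 : (0 : Fin (n + 1)) ≠ 1 := by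
    obtain ⟨k, rfl⟩ : ∃ k, n = k + 1 := ⟨n - 1, by omega⟩
    exact Fin.zero_ne_one
  refine ⟨fun ⟨a, h⟩ => X_mul_X_sq_ne_smul_X_pow_three h01 a h,
    fun Q hQ hc => ⟨2 * coeff (Finsupp.single 1 2) Q, ?_⟩⟩
  rw [contract_X_mul_X_sq h01 hQ, hc, mul_zero, zero_smul, add_zero]
end

section
/- Let V = ℂ^{n+1} (n ≥ 2) with basis e₀,…,e_n, and let A ⊂ V* ⊕ S²V* be the hyperplane orthogonal to (e₀, e₂²). Then there exist Q ∈ S²V and C ∈ S³V with (Q, C) ≠ (λ e₂², μ e₂³) for any scalars λ, μ simultaneously making both pure powers of e₂ — specifically Q = (1/2)e₀² and C = e₂²e₀ — such that for every (ℓ, q) ∈ A, the vector ℓ⌟Q + q⌟C is a scalar multiple of e₂, while C is not a multiple of e₂³. -/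
/-!
Since `ℓ⌟e₀ + q⌟e₂² = 0`, it suffices that `ℓ⌟(½e₀²) = (ℓ⌟e₀)·e₀` and that
`q⌟(e₂²e₀) - (q⌟e₂²)·e₀` is a multiple of `e₂`: then `ℓ⌟Q + q⌟C` is
`(ℓ⌟e₀ + q⌟e₂²)·e₀` plus a multiple of `e₂`. Both facts are linear in the form, so they reduce
to the monomial operators `∂ᵢ` and `∂ᵢ∂ⱼ`, where they are the Leibniz rule: the terms of
`∂ᵢ∂ⱼ(e₂²e₀)` other than `∂ᵢ∂ⱼ(e₂²)·e₀` and `e₂²·∂ᵢ∂ⱼe₀ = 0` carry a factor `∂(e₂²)`, a multiple of `e₂`.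
Finally `e₂²e₀` is not a multiple of `e₂³` because its `∂₀`-derivative `e₂²` is nonzero.
-/

open MvPolynomial

namespace List

variable {ι M : Type*} {f : ι → M → M}

theorem commute_foldl_iterate (hf : ∀ i j, Function.Commute (f i) (f j)) (α : ι → ℕ)
    (L : List ι) (j : ι) :
    Function.Commute (f j) (fun x => L.foldl (fun p i => (f i)^[α i] p) x) := by
  induction L with
  | nil => exact fun _ => rfl
  | cons a L ih =>
    intro x
    simp only [foldl_cons]
    rw [((hf a j).iterate_left (α a)).eq x]
    exact ih _

theorem foldl_iterate_add (hf : ∀ i j, Function.Commute (f i) (f j)) (α β : ι → ℕ)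
    (L : List ι) (x : M) :
    L.foldl (fun p i => (f i)^[α i + β i] p) x =
      L.foldl (fun p i => (f i)^[α i] p) (L.foldl (fun p i => (f i)^[β i] p) x) := by
  induction L generalizing x with
  | nil => rfl
  | cons a L ih =>
    rw [foldl_cons, foldl_cons, foldl_cons, ih, Function.iterate_add_apply,
      ((commute_foldl_iterate hf β L a).iterate_left (α a)).eq]

theorem foldl_iterate_single [DecidableEq ι] (i : ι) (k : ℕ) (L : List ι) (x : M) :
    L.foldl (fun p j => (f j)^[Finsupp.single i k j] p) x = (f i)^[L.count i * k] x := by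
  induction L generalizing x with
  | nil => simp
  | cons a L ih =>
    rw [foldl_cons, ih, count_cons]
    rcases eq_or_ne a i with rfl | ha
    · rw [Finsupp.single_eq_same, ← Function.iterate_add_apply]
      simp [add_mul]
    · simp [ha, Finsupp.single_eq_of_ne ha]

end List

namespace Finsupp

open scoped Pointwise

theorem exists_eq_single_of_degree_eq_one {ι : Type*} {α : ι →₀ ℕ} (h : α.degree = 1) :
    ∃ i, α = single i 1 := by
  have : α ∈ 1 • (single · 1) '' (Set.univ : Set ι) := by
    rw [nsmul_single_one_image]
    simp [h]
  obtain ⟨i, -, rfl⟩ := one_nsmul (M := Set (ι →₀ ℕ)) _ ▸ this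
  exact ⟨i, rfl⟩

theorem exists_eq_single_add_single_of_degree_eq_two {ι : Type*} {α : ι →₀ ℕ}
    (h : α.degree = 2) : ∃ i j, α = single i 1 + single j 1 := by
  have : α ∈ 2 • (single · 1) '' (Set.univ : Set ι) := by
    rw [nsmul_single_one_image]
    simp [h]
  obtain ⟨_, ⟨i, -, rfl⟩, _, ⟨j, -, rfl⟩, rfl⟩ := two_nsmul (M := Set (ι →₀ ℕ)) _ ▸ this
  exact ⟨i, j, rfl⟩

end Finsupp

namespace MvPolynomial

variable {σ R : Type*} [CommSemiring R]

theorem pderiv_X_eq_C [DecidableEq σ] (i j : σ) :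
    pderiv i (X j : MvPolynomial σ R) = C ((Pi.single i 1 : σ → R) j) := by
  rw [pderiv_X]
  rcases eq_or_ne j i with rfl | h <;> simp [*]

theorem pderiv_pderiv_comm (i j : σ) (p : MvPolynomial σ R) :
    pderiv i (pderiv j p) = pderiv j (pderiv i p) := by
  classical
  have pderiv_pderiv_X (a b k : σ) : pderiv a (pderiv b (X k : MvPolynomial σ R)) = 0 := by
    rw [pderiv_X_eq_C, pderiv_C]
  induction p using MvPolynomial.induction_on with
  | C a => simp
  | add p q hp hq => simp [hp, hq]
  | mul_X p k hp =>
    simp only [Derivation.leibniz, map_add, smul_eq_mul, hp, pderiv_pderiv_X]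
    ring

theorem pderiv_inv_two_smul_X_sq {K : Type*} [Field K] [NeZero (2 : K)] (i k : σ) :
    pderiv i ((2⁻¹ : K) • X k ^ 2 : MvPolynomial σ K) = pderiv i (X k) * X k := by
  have h : (C 2⁻¹ * 2 : MvPolynomial σ K) = 1 := by
    rw [← map_ofNat C 2, ← C_mul, inv_mul_cancel₀ two_ne_zero, C_1]
  simp only [smul_eq_C_mul, pderiv_C_mul, Derivation.leibniz_pow, nsmul_eq_mul, smul_eq_mul]
  linear_combination (pderiv i (X k) * X k) * h

theorem pderiv_pderiv_X_sq_mul_X_sub_mem_span {A : Type*} [CommRing A] [DecidableEq σ]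
    (a b i j : σ) :
    pderiv i (pderiv j (X a ^ 2 * X b : MvPolynomial σ A)) - pderiv i (pderiv j (X a ^ 2)) * X b
      ∈ A ∙ (X a : MvPolynomial σ A) := by
  set δ : σ → σ → A := fun i a => (Pi.single i 1 : σ → A) a
  refine Submodule.mem_span_singleton.mpr ⟨2 * (δ j a * δ i b + δ i a * δ j b), ?_⟩
  simp [δ, Derivation.leibniz, pderiv_X_eq_C, smul_eq_C_mul, map_ofNat, -pderiv_X]
  ring

end MvPolynomial

section Contraction

variable {m : ℕ}

theorem monomialDeriv_add (α β : Fin m →₀ ℕ) (T : MvPolynomial (Fin m) ℂ) :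
    monomialDeriv (α + β) T = monomialDeriv α (monomialDeriv β T) :=
  List.foldl_iterate_add (f := fun i q => pderiv i q) (fun i j => pderiv_pderiv_comm i j) α β _ T

theorem monomialDeriv_single (i : Fin m) (k : ℕ) (T : MvPolynomial (Fin m) ℂ) :
    monomialDeriv (Finsupp.single i k) T = (pderiv i)^[k] T := by
  rw [monomialDeriv, List.foldl_iterate_single,
    List.count_eq_one_of_mem (List.nodup_finRange m) (List.mem_finRange i), one_mul]

theorem monomialDeriv_single_one (i : Fin m) (T : MvPolynomial (Fin m) ℂ) :
    monomialDeriv (Finsupp.single i 1) T = pderiv i T :=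
  monomialDeriv_single i 1 T

theorem monomialDeriv_single_one_add_single_one (i j : Fin m) (T : MvPolynomial (Fin m) ℂ) :
    monomialDeriv (Finsupp.single i 1 + Finsupp.single j 1) T = pderiv i (pderiv j T) := by
  rw [monomialDeriv_add, monomialDeriv_single_one, monomialDeriv_single_one]

theorem contract_sub_mul_mem {d : ℕ} {Q : MvPolynomial (Fin m) ℂ} (hQ : Q.IsHomogeneous d)
    (S : Submodule ℂ (MvPolynomial (Fin m) ℂ)) {T U g : MvPolynomial (Fin m) ℂ}
    (h : ∀ α : Fin m →₀ ℕ, α.degree = d → monomialDeriv α T - monomialDeriv α U * g ∈ S) :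
    contract Q T - contract Q U * g ∈ S := by
  rw [contract, contract, Finset.sum_mul, ← Finset.sum_sub_distrib]
  refine S.sum_mem fun α hα => ?_
  rw [smul_mul_assoc, ← smul_sub]
  refine S.smul_mem _ (h α ?_)
  rw [Finsupp.degree_eq_weight_one]
  exact hQ (mem_support_iff.mp hα)

end Contraction

theorem stmt19 (n : ℕ) (hn : 2 ≤ n) :
    (∀ ℓ q : MvPolynomial (Fin (n + 1)) ℂ, ℓ.IsHomogeneous 1 → q.IsHomogeneous 2 →
      contract ℓ (X 0) + contract q (X 2 ^ 2) = 0 →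
      ∃ a : ℂ, contract ℓ ((2⁻¹ : ℂ) • X 0 ^ 2) + contract q (X 2 ^ 2 * X 0) =
        a • (X 2 : MvPolynomial (Fin (n + 1)) ℂ)) ∧
    ¬ ∃ μ : ℂ, (X 2 ^ 2 * X 0 : MvPolynomial (Fin (n + 1)) ℂ) =
        μ • (X 2 : MvPolynomial (Fin (n + 1)) ℂ) ^ 3 := by
  refine ⟨fun ℓ q hℓ hq hsum => ?_, ?_⟩
  · have hℓ' := contract_sub_mul_mem hℓ ⊥ (T := (2⁻¹ : ℂ) • X 0 ^ 2) (U := X 0) (g := X 0)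
      fun α hα => by
        obtain ⟨i, rfl⟩ := Finsupp.exists_eq_single_of_degree_eq_one hα
        rw [monomialDeriv_single_one, monomialDeriv_single_one, pderiv_inv_two_smul_X_sq,
          sub_self]
        exact zero_mem _
    have hq' := contract_sub_mul_mem hq (ℂ ∙ X 2) (T := X 2 ^ 2 * X 0) (U := X 2 ^ 2) (g := X 0)
      fun α hα => by
        obtain ⟨i, j, rfl⟩ := Finsupp.exists_eq_single_add_single_of_degree_eq_two hα
        simp only [monomialDeriv_single_one_add_single_one]
        exact pderiv_pderiv_X_sq_mul_X_sub_mem_span 2 0 i j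
    rw [Submodule.mem_bot, sub_eq_zero] at hℓ'
    obtain ⟨a, ha⟩ := Submodule.mem_span_singleton.mp hq'
    exact ⟨a, by rw [hℓ', ha]; linear_combination X 0 * hsum⟩
  · rintro ⟨μ, hμ⟩
    have h02 : (0 : Fin (n + 1)) ≠ 2 := by
      rw [Ne, Fin.ext_iff, Fin.val_zero]
      change ¬ 0 = 2 % (n + 1)
      rw [Nat.mod_eq_of_lt (by omega)]
      omega
    have := congrArg (pderiv 0) hμ
    simp [pderiv_X_of_ne h02.symm, X_ne_zero] at this
end
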